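/- For every integer n ≥ 6, the number of maximal independent sets of the cycle C_n satisfies mis(C_n) = mis(C_{n−2}) + mis(C_{n−3}). -/

import Mathlib

/-!
A maximal independent set of `C_n` is a cyclic binary word of length `n` with no two
consecutive ones and no three consecutive zeros, a condition on windows of three consecutive
letters. Cutting a cyclic word of length `m + k` after its first `m` letters `x`, the number of
valid words is a sum over the valid linear words `x` of the number of fillings `w` of length `k`
that are valid between the last two and the first two letters of `x`. For each of the sixteen
choices of these four boundary letters, a finite check shows that the fillings of length `3` are
exactly as many as those of lengths `1` and `0` together; summing over `x` gives the recurrence.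
-/

/-- A finset of vertices is independent: no two of its elements are adjacent. -/
def IsIndepFinset {V : Type*} (G : SimpleGraph V) (s : Finset V) : Prop :=
  ∀ ⦃a⦄, a ∈ s → ∀ ⦃b⦄, b ∈ s → ¬ G.Adj a b

/-- A finset of vertices is a maximal independent set: it is independent and is not
properly contained in any other independent set. -/
def IsMaxIndepFinset {V : Type*} (G : SimpleGraph V) (s : Finset V) : Prop :=
  IsIndepFinset G s ∧ ∀ t : Finset V, IsIndepFinset G t → s ⊆ t → s = t

/-- `mis G` is the number of maximal independent sets of `G`. -/
noncomputable def mis {V : Type*} (G : SimpleGraph V) : ℕ :=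
  Set.ncard {s : Finset V | IsMaxIndepFinset G s}

/-- `G` has an induced triangle matching of size `t`: there are `t` pairwise disjoint
triples of vertices, each triple pairwise adjacent (a triangle), with no edges between
distinct triples (so the induced subgraph on their union is a disjoint union of `t`
triangles). -/
def HasInducedTriangleMatching {V : Type*} (G : SimpleGraph V) (t : ℕ) : Prop :=
  ∃ f : Fin t → Finset V,
    (∀ i, (f i).card = 3) ∧
    (∀ i j, i ≠ j → Disjoint (f i) (f j)) ∧
    (∀ i, ∀ a ∈ f i, ∀ b ∈ f i, a ≠ b → G.Adj a b) ∧
    (∀ i j, i ≠ j → ∀ a ∈ f i, ∀ b ∈ f j, ¬ G.Adj a b)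

/-- `G` has an induced matching of size `t`: there are `t` pairwise disjoint
pairs of vertices, each pair adjacent, with no edges between distinct pairs. -/
def HasInducedMatching {V : Type*} (G : SimpleGraph V) (t : ℕ) : Prop :=
  ∃ f : Fin t → Finset V,
    (∀ i, (f i).card = 2) ∧
    (∀ i j, i ≠ j → Disjoint (f i) (f j)) ∧
    (∀ i, ∀ a ∈ f i, ∀ b ∈ f i, a ≠ b → G.Adj a b) ∧
    (∀ i j, i ≠ j → ∀ a ∈ f i, ∀ b ∈ f j, ¬ G.Adj a b)

open Finset

namespace List

variable {α : Type*} (R : α → α → α → Prop)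

def Chain3 : List α → Prop
  | a :: b :: c :: l => R a b c ∧ Chain3 (b :: c :: l)
  | _ => True

instance decidableChain3 [∀ a b c, Decidable (R a b c)] : ∀ l, Decidable (Chain3 R l)
  | a :: b :: c :: l =>
    haveI := decidableChain3 (b :: c :: l); inferInstanceAs (Decidable (R a b c ∧ _))
  | [] | [_] | [_, _] => isTrue trivial

theorem chain3_append : ∀ l₁ l₂ : List α,
    Chain3 R (l₁ ++ l₂) ↔ Chain3 R l₁ ∧ Chain3 R (l₁.drop (l₁.length - 2) ++ l₂)
  | [], _ | [_], _ | [_, _], _ => by simp [Chain3]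
  | a :: b :: c :: l, l₂ => by
    simp only [cons_append, Chain3, length_cons]
    rw [← cons_append, ← cons_append, chain3_append (b :: c :: l) l₂]
    simp [and_assoc]

theorem chain3_iff_getElem : ∀ l : List α,
    Chain3 R l ↔ ∀ i (h : i + 2 < l.length), R l[i] l[i + 1] l[i + 2]
  | [] | [_] | [_, _] => by simp [Chain3]
  | a :: b :: c :: l => by
    rw [Chain3, chain3_iff_getElem (b :: c :: l)]
    constructor
    · rintro ⟨h₀, h⟩ (_ | i) hi
      · exact h₀
      · exact h i (by simp at hi ⊢; omega)
    · intro h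
      exact ⟨h 0 (by simp), fun i hi => h (i + 1) (by simp at hi ⊢; omega)⟩

def CyclicChain3 (l : List α) : Prop := Chain3 R (l ++ l.take 2)

instance [∀ a b c, Decidable (R a b c)] (l : List α) : Decidable (CyclicChain3 R l) :=
  inferInstanceAs (Decidable (Chain3 R _))

open Fin.NatCast in
theorem getElem_ofFn_append_take_two {n : ℕ} (f : Fin (n + 2) → α) {j : ℕ}
    (hj : j < (ofFn f ++ (ofFn f).take 2).length) :
    (ofFn f ++ (ofFn f).take 2)[j] = f (j : Fin (n + 2)) := by
  simp only [length_append, length_ofFn, length_take] at hj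
  rw [getElem_append]
  split_ifs with h
  · simp only [length_ofFn] at h
    rw [List.getElem_ofFn]
    congr
    simp [Nat.mod_eq_of_lt h]
  · simp only [length_ofFn, not_lt] at h
    rw [getElem_take, List.getElem_ofFn]
    congr
    simp [Nat.mod_eq_sub_mod h, Nat.mod_eq_of_lt (show j - (n + 2) < n + 2 by omega)]

open Fin.NatCast in
theorem cyclicChain3_ofFn_iff {n : ℕ} (f : Fin (n + 2) → α) :
    CyclicChain3 R (ofFn f) ↔ ∀ i, R (f i) (f (i + 1)) (f (i + 2)) := by
  rw [CyclicChain3, chain3_iff_getElem]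
  simp only [getElem_ofFn_append_take_two, length_append, length_ofFn, length_take]
  constructor
  · intro h i
    simpa using h i (by omega)
  · intro h j hj
    simpa using h (j : Fin (n + 2))

theorem cyclicChain3_ofFn_append {m k : ℕ} (hm : 2 ≤ m) (x : Fin m → α) (w : Fin k → α) :
    CyclicChain3 R (ofFn (Fin.append x w)) ↔
      Chain3 R (ofFn x) ∧ Chain3 R ((ofFn x).drop (m - 2) ++ ofFn w ++ (ofFn x).take 2) := by
  rw [CyclicChain3, ofFn_fin_append, take_append_of_le_length (by simpa using hm), append_assoc,
    chain3_append, length_ofFn, append_assoc]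

end List

section WordCounting

open List

variable {α : Type*} [Fintype α] (R : α → α → α → Prop) [∀ a b c, Decidable (R a b c)]

def cyclicWordCount (n : ℕ) : ℕ := #{f : Fin n → α | CyclicChain3 R (ofFn f)}

def extensionCount (k : ℕ) (p q : List α) : ℕ :=
  #{w : Fin k → α | Chain3 R (p ++ ofFn w ++ q)}

theorem cyclicWordCount_add {m : ℕ} (hm : 2 ≤ m) (k : ℕ) :
    cyclicWordCount R (m + k) =
      ∑ x : Fin m → α with Chain3 R (ofFn x),
        extensionCount R k ((ofFn x).drop (m - 2)) ((ofFn x).take 2) := by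
  rw [cyclicWordCount, card_filter, ← (Fin.appendEquiv m k).sum_comp, Fintype.sum_prod_type,
    sum_filter]
  refine sum_congr rfl fun x _ => ?_
  simp only [Fin.appendEquiv, Equiv.coe_fn_mk, cyclicChain3_ofFn_append R hm, extensionCount,
    card_filter, ite_and]
  split_ifs
  · simp [append_assoc]
  · simp

end WordCounting

def MisWindow (a b c : Bool) : Prop := ¬(a ∧ b) ∧ (a ∨ b ∨ c)

instance (a b c : Bool) : Decidable (MisWindow a b c) := inferInstanceAs (Decidable (¬_ ∧ _))

section MaximalIndependentSets

variable {V : Type*} [DecidableEq V] {G : SimpleGraph V} {s : Finset V}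

theorem isMaxIndepFinset_iff :
    IsMaxIndepFinset G s ↔ IsIndepFinset G s ∧ ∀ v ∉ s, ∃ u ∈ s, G.Adj u v := by
  refine and_congr_right fun hs => ⟨fun hmax v hv => ?_, fun hdom t ht hst => ?_⟩
  · by_contra! hno
    have hins : IsIndepFinset G (insert v s) := by
      intro a ha b hb hab
      rw [mem_insert] at ha hb
      rcases ha with rfl | ha <;> rcases hb with rfl | hb
      · exact G.irrefl hab
      · exact hno b hb hab.symm
      · exact hno a ha hab
      · exact hs ha hb hab
    exact hv (hmax _ hins (subset_insert v s) ▸ mem_insert_self v s)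
  · refine hst.antisymm fun v hvt => ?_
    by_contra hvs
    obtain ⟨u, hu, huv⟩ := hdom v hvs
    exact ht (hst hu) hvt huv

end MaximalIndependentSets

namespace SimpleGraph

variable {n : ℕ} {s : Finset (Fin (n + 2))}

theorem cycleGraph_adj_iff_eq_add_one {u v : Fin (n + 2)} :
    (cycleGraph (n + 2)).Adj u v ↔ u = v + 1 ∨ v = u + 1 := by
  rw [cycleGraph_adj, sub_eq_iff_eq_add', sub_eq_iff_eq_add']

theorem isIndepFinset_cycleGraph_iff :
    IsIndepFinset (cycleGraph (n + 2)) s ↔ ∀ i, ¬(i ∈ s ∧ i + 1 ∈ s) := by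
  constructor
  · rintro h i ⟨hi, hi'⟩
    exact h hi hi' (cycleGraph_adj_iff_eq_add_one.2 (Or.inr rfl))
  · intro h a ha b hb hab
    rcases cycleGraph_adj_iff_eq_add_one.1 hab with rfl | rfl
    · exact h b ⟨hb, ha⟩
    · exact h a ⟨ha, hb⟩

theorem dominating_cycleGraph_iff :
    (∀ v ∉ s, ∃ u ∈ s, (cycleGraph (n + 2)).Adj u v) ↔
      ∀ i, i ∈ s ∨ i + 1 ∈ s ∨ i + 2 ∈ s := by
  simp_rw [cycleGraph_adj_iff_eq_add_one]
  constructor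
  · intro h i
    by_contra! hi
    obtain ⟨u, hu, rfl | hu'⟩ := h (i + 1) hi.2.1
    · exact hi.2.2 (by rwa [show i + 1 + 1 = i + 2 by open Fin.CommRing in ring] at hu)
    · exact hi.1 (add_right_cancel hu' ▸ hu)
  · intro h v hv
    rcases h (v - 1) with h' | h' | h'
    · exact ⟨v - 1, h', Or.inr (sub_add_cancel v 1).symm⟩
    · exact absurd (by rwa [sub_add_cancel] at h') hv
    · refine ⟨v + 1, ?_, Or.inl rfl⟩
      rwa [show v - 1 + 2 = v + 1 by open Fin.CommRing in ring] at h'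

theorem isMaxIndepFinset_cycleGraph_iff :
    IsMaxIndepFinset (cycleGraph (n + 2)) s ↔
      ∀ i, MisWindow (decide (i ∈ s)) (decide (i + 1 ∈ s)) (decide (i + 2 ∈ s)) := by
  rw [isMaxIndepFinset_iff, isIndepFinset_cycleGraph_iff, dominating_cycleGraph_iff,
    ← forall_and]
  simp [MisWindow]

end SimpleGraph

open SimpleGraph in
theorem mis_cycleGraph_eq_cyclicWordCount {n : ℕ} (hn : 2 ≤ n) :
    mis (cycleGraph n) = cyclicWordCount MisWindow n := by
  obtain ⟨n, rfl⟩ := Nat.exists_eq_add_of_le' hn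
  classical
  rw [mis, Set.ncard_eq_toFinset_card', cyclicWordCount]
  refine card_nbij' (fun s i => decide (i ∈ s)) (fun f => ({i | f i} : Finset _)) ?_ ?_ ?_ ?_
  · intro s hs
    simp only [Set.coe_toFinset, Set.mem_ofPred_eq, coe_filter, mem_univ, true_and] at hs ⊢
    rwa [List.cyclicChain3_ofFn_iff, ← isMaxIndepFinset_cycleGraph_iff]
  · intro f hf
    simp only [Set.coe_toFinset, Set.mem_ofPred_eq, coe_filter, mem_univ, true_and] at hf ⊢
    rw [List.cyclicChain3_ofFn_iff] at hf
    simpa [isMaxIndepFinset_cycleGraph_iff] using hf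
  · intro s _
    ext i
    simp
  · intro f _
    funext i
    simp

theorem extensionCount_misWindow_three {p q : List Bool} (hp : p.length = 2)
    (hq : q.length = 2) :
    extensionCount MisWindow 3 p q =
      extensionCount MisWindow 1 p q + extensionCount MisWindow 0 p q := by
  obtain ⟨a, b, rfl⟩ := List.length_eq_two.1 hp
  obtain ⟨c, d, rfl⟩ := List.length_eq_two.1 hq
  revert a b c d
  decide

theorem cyclicWordCount_misWindow_add_three {m : ℕ} (hm : 2 ≤ m) :
    cyclicWordCount MisWindow (m + 3) =
      cyclicWordCount MisWindow (m + 1) + cyclicWordCount MisWindow m := by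
  change _ = _ + cyclicWordCount MisWindow (m + 0)
  rw [cyclicWordCount_add _ hm 3, cyclicWordCount_add _ hm 1, cyclicWordCount_add _ hm 0,
    ← sum_add_distrib]
  refine sum_congr rfl fun x _ => extensionCount_misWindow_three ?_ ?_ <;> simp <;> omega

theorem mis_cycle_recurrence (n : ℕ) (hn : 6 ≤ n) :
    mis (SimpleGraph.cycleGraph n) =
      mis (SimpleGraph.cycleGraph (n - 2)) + mis (SimpleGraph.cycleGraph (n - 3)) := by
  have h := cyclicWordCount_misWindow_add_three (m := n - 3) (by omega)
  rw [show n - 3 + 3 = n by omega, show n - 3 + 1 = n - 2 by omega] at h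
  rw [mis_cycleGraph_eq_cyclicWordCount (n := n) (by omega),
    mis_cycleGraph_eq_cyclicWordCount (n := n - 2) (by omega),
    mis_cycleGraph_eq_cyclicWordCount (n := n - 3) (by omega), h]
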